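/- Let T be a complete CLO theory, let S be a sufficiently saturated model of T, and let Φ ∈ IT(T). Then the set Φ(S) of realizations of Φ in S, with its induced L_κ-structure, is either a singleton or a self-additive CLO. -/

import Mathlib

open FirstOrder Language Set

/-- Relation symbols of the language `L_κ` of colored linear orders:
a binary `<` and a unary color predicate for each `i : ι`. -/
inductive CLORel (ι : Type) : ℕ → Type
  | lt : CLORel ι 2
  | color (i : ι) : CLORel ι 1

/-- The language `L_κ`, where the colors are indexed by `ι`. -/
def CLOLang (ι : Type) : Language :=
  ⟨fun _ => Empty, CLORel ι⟩

/-- Interpretation of the relation symbols on a linear order `M` with colors `c`. -/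
def cloRelMap {ι M : Type} [LinearOrder M] (c : ι → Set M) :
    ∀ {n}, CLORel ι n → (Fin n → M) → Prop
  | _, .lt => fun v => v 0 < v 1
  | _, .color i => fun v => v 0 ∈ c i

/-- The canonical `L_κ`-structure (a colored linear order, CLO) on a linear
order `M` whose colors are given by `c : ι → Set M`. -/
def CLOStr (ι M : Type) [LinearOrder M] (c : ι → Set M) : (CLOLang ι).Structure M where
  funMap := fun f => Empty.elim f
  RelMap := cloRelMap c

/-- Satisfaction of an `L_κ`-formula in the CLO `(M, <, c)`. -/
def Sat {ι : Type} (M : Type) [LinearOrder M] (c : ι → Set M) {α : Type}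
    (φ : (CLOLang ι).Formula α) (v : α → M) : Prop :=
  letI := CLOStr ι M c
  φ.Realize v

/-- The induced colors on a subset of a CLO. -/
def subColor {ι M : Type} (c : ι → Set M) (s : Set M) : ι → Set s :=
  fun i => {x | (x : M) ∈ c i}

/-- Elementary equivalence of CLOs. -/
def CLOEquiv (ι : Type) (M : Type) [LinearOrder M] (cM : ι → Set M)
    (N : Type) [LinearOrder N] (cN : ι → Set N) : Prop :=
  letI := CLOStr ι M cM
  letI := CLOStr ι N cN
  M ≅[CLOLang ι] N

/-- Isomorphism of CLOs (as `L_κ`-structures). -/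
def CLOIso (ι : Type) (M : Type) [LinearOrder M] (cM : ι → Set M)
    (N : Type) [LinearOrder N] (cN : ι → Set N) : Prop :=
  letI := CLOStr ι M cM
  letI := CLOStr ι N cN
  Nonempty (M ≃[CLOLang ι] N)

/-- The complete theory of a CLO. -/
def CLOTheory (ι : Type) (M : Type) [LinearOrder M] (c : ι → Set M) : (CLOLang ι).Theory :=
  letI := CLOStr ι M c
  (CLOLang ι).completeTheory M

/-- The induced colors on a lexicographic sum `Σₗ i, A i` of CLOs. -/
def sigmaColor {ι I : Type} {A : I → Type} (c : ∀ i, ι → Set (A i)) :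
    ι → Set (Σₗ i, A i) :=
  fun k => {x | (ofLex x).2 ∈ c (ofLex x).1 k}

/-- The induced colors on a two-term lexicographic sum `α ⊕ₗ β` of CLOs. -/
def sumColor2 {ι α β : Type} (ca : ι → Set α) (cb : ι → Set β) : ι → Set (α ⊕ₗ β) :=
  fun k => {x | Sum.elim (· ∈ ca k) (· ∈ cb k) (ofLex x)}

/-- The set defined by a parameter-free formula in one variable in a CLO. -/
def FmlSet (ι : Type) (M : Type) [LinearOrder M] (c : ι → Set M)
    (φ : (CLOLang ι).Formula Unit) : Set M :=
  {x | Sat M c φ fun _ => x}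

/-- A CLO is self-additive if it has more than one point and its only
convex parameter-free-definable subsets are `∅` and the whole order. -/
def SelfAdditive (ι : Type) (M : Type) [LinearOrder M] (c : ι → Set M) : Prop :=
  Nontrivial M ∧
    ∀ φ : (CLOLang ι).Formula Unit, (FmlSet ι M c φ).OrdConnected →
      FmlSet ι M c φ = ∅ ∨ FmlSet ι M c φ = Set.univ

/-- `a ∼ b`: some set definable with parameter `a` is convex, bounded above and
below, and contains both `a` and `b`. -/
def SimRel (ι : Type) {M : Type} [LinearOrder M] (c : ι → Set M) (a b : M) : Prop :=
  ∃ φ : (CLOLang ι).Formula (Unit ⊕ Unit),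
    (Set.OrdConnected {x | Sat M c φ (Sum.elim (fun _ => x) fun _ => a)}) ∧
    (∃ u : M, ∀ z ∈ {x | Sat M c φ (Sum.elim (fun _ => x) fun _ => a)}, z < u) ∧
    (∃ l : M, ∀ z ∈ {x | Sat M c φ (Sum.elim (fun _ => x) fun _ => a)}, l < z) ∧
    a ∈ {x | Sat M c φ (Sum.elim (fun _ => x) fun _ => a)} ∧
    b ∈ {x | Sat M c φ (Sum.elim (fun _ => x) fun _ => a)}

/-- `f : M → N` is an elementary map of CLOs. -/
def IsElemMap (ι : Type) {M N : Type} [LinearOrder M] [LinearOrder N]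
    (cM : ι → Set M) (cN : ι → Set N) (f : M → N) : Prop :=
  ∀ (k : ℕ) (φ : (CLOLang ι).Formula (Fin k)) (v : Fin k → M),
    Sat M cM φ v ↔ Sat N cN φ (f ∘ v)

/-- A subset of a CLO, with its induced structure, is an elementary substructure. -/
def IsElemSubset (ι : Type) (B : Type) [LinearOrder B] (cB : ι → Set B) (s : Set B) : Prop :=
  IsElemMap ι (subColor cB s) cB (Subtype.val : s → B)

/-- A complete `L_κ`-theory is ℵ₀-categorical: any two at-most-countable CLO
models of it are isomorphic.  (Finite and empty models are allowed.) -/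
def Aleph0CatTheory (ι : Type) (T : (CLOLang ι).Theory) : Prop :=
  ∀ (N₁ N₂ : Type) (i₁ : LinearOrder N₁) (i₂ : LinearOrder N₂)
    (c₁ : ι → Set N₁) (c₂ : ι → Set N₂),
    Countable N₁ → Countable N₂ →
    (letI := i₁; CLOTheory ι N₁ c₁) = T → (letI := i₂; CLOTheory ι N₂ c₂) = T →
    (letI := i₁; letI := i₂; CLOIso ι N₁ c₁ N₂ c₂)

/-- `φ` is a convex formula for the complete theory of the CLO `(M₀, c₀)`:
its realizations in every model of that theory form a convex set. -/
def ConvexFml (ι : Type) (M₀ : Type) [LinearOrder M₀] (c₀ : ι → Set M₀)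
    (φ : (CLOLang ι).Formula Unit) : Prop :=
  ∀ (B : Type) (iB : LinearOrder B) (cB : ι → Set B),
    (letI := iB; CLOEquiv ι B cB M₀ c₀) → (letI := iB; Set.OrdConnected (FmlSet ι B cB φ))

/-- The set of common realizations of a set of one-variable formulas in a CLO. -/
def TypeSet (ι : Type) (M : Type) [LinearOrder M] (c : ι → Set M)
    (Φ : Set ((CLOLang ι).Formula Unit)) : Set M :=
  {x | ∀ φ ∈ Φ, Sat M c φ fun _ => x}

/-- A set of one-variable formulas is consistent with the complete theory of
`(M₀, c₀)`: it is realized in some model of that theory. -/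
def TypeConsistent (ι : Type) (M₀ : Type) [LinearOrder M₀] (c₀ : ι → Set M₀)
    (Φ : Set ((CLOLang ι).Formula Unit)) : Prop :=
  ∃ (B : Type) (iB : LinearOrder B) (cB : ι → Set B),
    (letI := iB; CLOEquiv ι B cB M₀ c₀) ∧ (letI := iB; ∃ b : B, b ∈ TypeSet ι B cB Φ)

/-- `Φ` is a convex type of the complete theory of `(M₀, c₀)`: a maximal
consistent set of convex formulas over `∅`.  `IT(T)` is the set of all such. -/
def IsConvexType (ι : Type) (M₀ : Type) [LinearOrder M₀] (c₀ : ι → Set M₀)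
    (Φ : Set ((CLOLang ι).Formula Unit)) : Prop :=
  (∀ φ ∈ Φ, ConvexFml ι M₀ c₀ φ) ∧ TypeConsistent ι M₀ c₀ Φ ∧
    ∀ ψ, ConvexFml ι M₀ c₀ ψ → TypeConsistent ι M₀ c₀ (insert ψ Φ) → ψ ∈ Φ

/-- A convex type is isolated if it contains a convex formula contained in no
other convex type. -/
def IsolatedCT (ι : Type) (M₀ : Type) [LinearOrder M₀] (c₀ : ι → Set M₀)
    (Φ : Set ((CLOLang ι).Formula Unit)) : Prop :=
  ∃ φ ∈ Φ, ConvexFml ι M₀ c₀ φ ∧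
    ∀ Ψ, IsConvexType ι M₀ c₀ Ψ → φ ∈ Ψ → Ψ = Φ

/-- A CLO is ℵ₀-saturated: every finitely-satisfiable set of formulas in one
variable over finitely many parameters is realized. -/
def Aleph0Saturated (ι : Type) (S : Type) [LinearOrder S] (cS : ι → Set S) : Prop :=
  ∀ (m : ℕ) (a : Fin m → S) (p : Set ((CLOLang ι).Formula (Unit ⊕ Fin m))),
    (∀ q : Finset ((CLOLang ι).Formula (Unit ⊕ Fin m)), ↑q ⊆ p →
      ∃ x : S, ∀ φ ∈ q, Sat S cS φ (Sum.elim (fun _ => x) a)) →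
    ∃ x : S, ∀ φ ∈ p, Sat S cS φ (Sum.elim (fun _ => x) a)

/-- A CLO is strongly ℵ₀-homogeneous: finite tuples with the same complete type
are conjugate under an automorphism. -/
def StronglyAleph0Homogeneous (ι : Type) (S : Type) [LinearOrder S] (cS : ι → Set S) : Prop :=
  ∀ (m : ℕ) (a b : Fin m → S),
    (∀ φ : (CLOLang ι).Formula (Fin m), Sat S cS φ a ↔ Sat S cS φ b) →
    ∃ g : S ≃ S, (∀ x y : S, x < y ↔ g x < g y) ∧
      (∀ (k : ι) (x : S), x ∈ cS k ↔ g x ∈ cS k) ∧ ∀ i, g (a i) = b i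

/-- Sufficiently saturated: ℵ₀-saturated and strongly ℵ₀-homogeneous. -/
def SuffSaturated (ι : Type) (S : Type) [LinearOrder S] (cS : ι → Set S) : Prop :=
  Aleph0Saturated ι S cS ∧ StronglyAleph0Homogeneous ι S cS

/-- The complete theory of `(M₀, c₀)` is locally simple: for every sufficiently
saturated model `S` and every convex type `Φ`, the theory `T_Φ = Th(Φ(S))` is
ℵ₀-categorical. -/
def LocallySimple (ι : Type) (M₀ : Type) [LinearOrder M₀] (c₀ : ι → Set M₀) : Prop :=
  ∀ (S : Type) [LinearOrder S], ∀ (cS : ι → Set S),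
    CLOEquiv ι S cS M₀ c₀ → SuffSaturated ι S cS →
    ∀ Φ, IsConvexType ι M₀ c₀ Φ →
      Aleph0CatTheory ι
        (CLOTheory ι (TypeSet ι S cS Φ) (subColor cS (TypeSet ι S cS Φ)))

/-- A finite set of pairs is a partial isomorphism of CLOs: it preserves `<`,
equality, and each color, in both directions. -/
def IsPartialIso (ι : Type) {M N : Type} [LinearOrder M] [LinearOrder N]
    (cM : ι → Set M) (cN : ι → Set N) (f : Finset (M × N)) : Prop :=
  ∀ p ∈ f, ∀ q ∈ f,
    (p.1 < q.1 ↔ p.2 < q.2) ∧ (p.1 = q.1 ↔ p.2 = q.2) ∧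
    ∀ k, p.1 ∈ cM k ↔ p.2 ∈ cN k

/-- Back-and-forth equivalence of CLOs: a nonempty family of finite partial
isomorphisms with the back-and-forth extension properties. -/
def BackForthEquiv (ι : Type) (M : Type) [LinearOrder M] (cM : ι → Set M)
    (N : Type) [LinearOrder N] (cN : ι → Set N) : Prop :=
  ∃ F : Set (Finset (M × N)), F.Nonempty ∧ (∀ f ∈ F, IsPartialIso ι cM cN f) ∧
    (∀ f ∈ F, ∀ m : M, ∃ g ∈ F, f ⊆ g ∧ ∃ n : N, (m, n) ∈ g) ∧
    (∀ f ∈ F, ∀ n : N, ∃ g ∈ F, f ⊆ g ∧ ∃ m : M, (m, n) ∈ g)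

/-- The set of complete theories `Th(Φ(A))` as `A` ranges over models of the
complete theory of `(M₀, c₀)` (including the theory of the empty structure,
in case `Φ` is omitted). -/
def TheoriesAt (ι : Type) (M₀ : Type) [LinearOrder M₀] (c₀ : ι → Set M₀)
    (Φ : Set ((CLOLang ι).Formula Unit)) : Set ((CLOLang ι).Theory) :=
  {T | ∃ (A : Type) (iA : LinearOrder A) (cA : ι → Set A),
    (letI := iA; CLOEquiv ι A cA M₀ c₀) ∧
    T = (letI := iA; CLOTheory ι (TypeSet ι A cA Φ) (subColor cA (TypeSet ι A cA Φ)))}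

/-!
Let `D` be a convex definable subset of `P = Φ(S)` with `a ∈ D` and `b ∈ P \ D`. Automorphisms
of `S` preserve `P` and `D`, so by homogeneity `a` and `b` have different types, separated by
some `θ`. If `tp(a)` had no realization above `b`, saturation would give `φ ∈ tp(a)` all of whose
realizations are `≤ b`. The downward closure of `φ ∧ θ` is a convex formula satisfied by `a`,
so it belongs to `Φ` by maximality; hence `b ≤ y` for some `y ⊨ φ ∧ θ`, and then `y = b`
contradicts `b ⊭ θ`. Symmetrically `tp(a)` is realized below `b`, and both realizations lie in
`D`, so convexity puts `b` in `D`.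
-/

section

variable {ι : Type}

section Satisfaction

variable {M : Type} [LinearOrder M] {c : ι → Set M} {α : Type}

theorem sat_inf {φ ψ : (CLOLang ι).Formula α} {v : α → M} :
    Sat M c (φ ⊓ ψ) v ↔ Sat M c φ v ∧ Sat M c ψ v :=
  letI := CLOStr ι M c
  Formula.realize_inf

theorem sat_not {φ : (CLOLang ι).Formula α} {v : α → M} :
    Sat M c φ.not v ↔ ¬Sat M c φ v :=
  letI := CLOStr ι M c
  Formula.realize_not

theorem sat_top {v : α → M} : Sat M c (⊤ : (CLOLang ι).Formula α) v :=
  letI := CLOStr ι M c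
  Formula.realize_top.2 trivial

theorem sat_relabel {β : Type} {φ : (CLOLang ι).Formula α} {g : α → β} {v : β → M} :
    Sat M c (φ.relabel g) v ↔ Sat M c φ (v ∘ g) :=
  letI := CLOStr ι M c
  Formula.realize_relabel

theorem sat_iInf {β : Type} [Finite β] {f : β → (CLOLang ι).Formula α} {v : α → M} :
    Sat M c (Formula.iInf f) v ↔ ∀ b, Sat M c (f b) v :=
  letI := CLOStr ι M c
  Formula.realize_iInf

theorem sat_iExs_unit {φ : (CLOLang ι).Formula (α ⊕ Unit)} {v : α → M} :
    Sat M c (φ.iExs Unit) v ↔ ∃ y : M, Sat M c φ (Sum.elim v fun _ => y) :=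
  letI := CLOStr ι M c
  Formula.realize_iExs.trans ⟨fun ⟨i, h⟩ => ⟨i (), h⟩, fun ⟨y, h⟩ => ⟨fun _ => y, h⟩⟩

def ltFml (i j : α) : (CLOLang ι).Formula α :=
  Relations.formula₂ CLORel.lt (Term.var i) (Term.var j)

theorem sat_ltFml {i j : α} {v : α → M} : Sat M c (ltFml i j) v ↔ v i < v j :=
  letI := CLOStr ι M c
  Formula.realize_rel₂

noncomputable def lowerClosureFml (φ : (CLOLang ι).Formula Unit) : (CLOLang ι).Formula Unit :=
  Formula.iExs Unit (φ.relabel Sum.inr ⊓ (ltFml (Sum.inr ()) (Sum.inl ())).not)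

noncomputable def upperClosureFml (φ : (CLOLang ι).Formula Unit) : (CLOLang ι).Formula Unit :=
  Formula.iExs Unit (φ.relabel Sum.inr ⊓ (ltFml (Sum.inl ()) (Sum.inr ())).not)

theorem sat_lowerClosureFml {φ : (CLOLang ι).Formula Unit} {x : M} :
    Sat M c (lowerClosureFml φ) (fun _ => x) ↔ ∃ y, Sat M c φ (fun _ => y) ∧ x ≤ y := by
  simp only [lowerClosureFml, sat_iExs_unit, sat_inf, sat_relabel, sat_not, sat_ltFml, not_lt]
  rfl

theorem sat_upperClosureFml {φ : (CLOLang ι).Formula Unit} {x : M} :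
    Sat M c (upperClosureFml φ) (fun _ => x) ↔ ∃ y, Sat M c φ (fun _ => y) ∧ y ≤ x := by
  simp only [upperClosureFml, sat_iExs_unit, sat_inf, sat_relabel, sat_not, sat_ltFml, not_lt]
  rfl

theorem isLowerSet_fmlSet_lowerClosureFml (φ : (CLOLang ι).Formula Unit) :
    IsLowerSet (FmlSet ι M c (lowerClosureFml φ)) := fun _ _ hle hx => by
  obtain ⟨y, hy, hxy⟩ := sat_lowerClosureFml.1 hx
  exact sat_lowerClosureFml.2 ⟨y, hy, hle.trans hxy⟩

theorem isUpperSet_fmlSet_upperClosureFml (φ : (CLOLang ι).Formula Unit) :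
    IsUpperSet (FmlSet ι M c (upperClosureFml φ)) := fun _ _ hle hx => by
  obtain ⟨y, hy, hyx⟩ := sat_upperClosureFml.1 hx
  exact sat_upperClosureFml.2 ⟨y, hy, hyx.trans hle⟩

end Satisfaction

theorem convexFml_lowerClosureFml {M₀ : Type} [LinearOrder M₀] {c₀ : ι → Set M₀}
    (φ : (CLOLang ι).Formula Unit) : ConvexFml ι M₀ c₀ (lowerClosureFml φ) :=
  fun _ iB _ _ => letI := iB; (isLowerSet_fmlSet_lowerClosureFml φ).ordConnected

theorem convexFml_upperClosureFml {M₀ : Type} [LinearOrder M₀] {c₀ : ι → Set M₀}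
    (φ : (CLOLang ι).Formula Unit) : ConvexFml ι M₀ c₀ (upperClosureFml φ) :=
  fun _ iB _ _ => letI := iB; (isUpperSet_fmlSet_upperClosureFml φ).ordConnected

section Types

variable {M : Type} [LinearOrder M] {c : ι → Set M}

def SameType (c : ι → Set M) (a b : M) : Prop :=
  ∀ θ : (CLOLang ι).Formula Unit, Sat M c θ (fun _ => a) ↔ Sat M c θ (fun _ => b)

theorem sameType_of_forall_sat_imp {a b : M}
    (h : ∀ θ : (CLOLang ι).Formula Unit, Sat M c θ (fun _ => a) → Sat M c θ (fun _ => b)) :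
    SameType c a b := fun θ =>
  ⟨h θ, fun hb => by_contra fun ha => sat_not.1 (h θ.not (sat_not.2 ha)) hb⟩

theorem exists_sat_not_sat_of_not_sameType {a b : M} (h : ¬SameType c a b) :
    ∃ θ : (CLOLang ι).Formula Unit, Sat M c θ (fun _ => a) ∧ ¬Sat M c θ (fun _ => b) := by
  by_contra! hab
  exact h (sameType_of_forall_sat_imp hab)

theorem SameType.mem_typeSet {a b : M} (h : SameType c a b) {Φ : Set ((CLOLang ι).Formula Unit)}
    (ha : a ∈ TypeSet ι M c Φ) : b ∈ TypeSet ι M c Φ := fun θ hθ => (h θ).1 (ha θ hθ)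

theorem sat_comp_equiv (g : M ≃ M) (hlt : ∀ x y, x < y ↔ g x < g y)
    (hc : ∀ k x, x ∈ c k ↔ g x ∈ c k) {α : Type} (φ : (CLOLang ι).Formula α) (v : α → M) :
    Sat M c φ (g ∘ v) ↔ Sat M c φ v := by
  let _ := CLOStr ι M c
  let e : M ≃[CLOLang ι] M :=
    { toEquiv := g
      map_fun' := fun f => f.elim
      map_rel' := fun
        | .lt, v => (hlt (v 0) (v 1)).symm
        | .color k, v => (hc k (v 0)).symm }
  exact StrongHomClass.realize_formula e φ

theorem StronglyAleph0Homogeneous.exists_equiv_of_sameType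
    (hhom : StronglyAleph0Homogeneous ι M c) {a b : M} (h : SameType c a b) :
    ∃ g : M ≃ M, (∀ x y, x < y ↔ g x < g y) ∧ (∀ k x, x ∈ c k ↔ g x ∈ c k) ∧ g a = b := by
  obtain ⟨g, hlt, hc, hab⟩ := hhom 1 (fun _ => a) (fun _ => b) fun φ =>
    (sat_relabel.symm.trans (h (φ.relabel fun _ => ()))).trans sat_relabel
  exact ⟨g, hlt, hc, hab 0⟩

theorem StronglyAleph0Homogeneous.mem_fmlSet_of_sameType (hhom : StronglyAleph0Homogeneous ι M c)
    {Φ : Set ((CLOLang ι).Formula Unit)} {φ : (CLOLang ι).Formula Unit}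
    {a b : TypeSet ι M c Φ} (h : SameType c (a : M) b)
    (ha : a ∈ FmlSet ι (TypeSet ι M c Φ) (subColor c (TypeSet ι M c Φ)) φ) :
    b ∈ FmlSet ι (TypeSet ι M c Φ) (subColor c (TypeSet ι M c Φ)) φ := by
  obtain ⟨g, hlt, hc, hab⟩ := hhom.exists_equiv_of_sameType h
  have hΦ : ∀ x, x ∈ TypeSet ι M c Φ ↔ g x ∈ TypeSet ι M c Φ := fun x =>
    forall₂_congr fun θ _ => (sat_comp_equiv g hlt hc θ fun _ => x).symm
  have hG := sat_comp_equiv (g.subtypeEquiv hΦ) (fun x y => hlt x y) (fun k x => hc k x) φ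
    fun _ => a
  rw [show (g.subtypeEquiv hΦ ∘ fun _ => a) = fun _ => b from funext fun _ => Subtype.ext hab]
    at hG
  exact hG.2 ha

end Types

section Saturation

variable {M : Type} [LinearOrder M] {c : ι → Set M}

theorem Aleph0Saturated.exists_mem_typeSet_and_sat (hsat : Aleph0Saturated ι M c) {m : ℕ}
    (b : Fin m → M) (p : Set ((CLOLang ι).Formula Unit)) (γ : (CLOLang ι).Formula (Unit ⊕ Fin m))
    (h : ∀ q : Finset ((CLOLang ι).Formula Unit), ↑q ⊆ p →
      ∃ x, (∀ θ ∈ q, Sat M c θ (fun _ => x)) ∧ Sat M c γ (Sum.elim (fun _ => x) b)) :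
    ∃ x ∈ TypeSet ι M c p, Sat M c γ (Sum.elim (fun _ => x) b) := by
  classical
  let f : (CLOLang ι).Formula Unit → (CLOLang ι).Formula (Unit ⊕ Fin m) := (·.relabel Sum.inl)
  obtain ⟨x, hx⟩ := hsat m b (insert γ (f '' p)) fun q hq => by
    have hqγ : (↑(q.erase γ) : Set _) ⊆ f '' p := by
      rw [Finset.coe_erase, sdiff_singleton_subset_iff]
      exact hq
    obtain ⟨q', hq'p, hq'⟩ := Finset.subset_set_image_iff.1 hqγ
    obtain ⟨x, hxq', hxγ⟩ := h q' hq'p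
    refine ⟨x, fun ψ hψ => ?_⟩
    by_cases hψγ : ψ = γ
    · exact hψγ ▸ hxγ
    · obtain ⟨θ, hθ, rfl⟩ := Finset.mem_image.1 (hq' ▸ Finset.mem_erase.2 ⟨hψγ, hψ⟩)
      exact sat_relabel.2 (hxq' θ hθ)
  exact ⟨x, fun θ hθ => sat_relabel.1 (hx _ (mem_insert_of_mem _ ⟨θ, hθ, rfl⟩)),
    hx γ (mem_insert _ _)⟩

theorem Aleph0Saturated.exists_sameType_and_sat (hsat : Aleph0Saturated ι M c) {m : ℕ}
    (a : M) (b : Fin m → M) (γ : (CLOLang ι).Formula (Unit ⊕ Fin m))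
    (h : ∀ φ : (CLOLang ι).Formula Unit, Sat M c φ (fun _ => a) →
      ∃ x, Sat M c φ (fun _ => x) ∧ Sat M c γ (Sum.elim (fun _ => x) b)) :
    ∃ x, SameType c a x ∧ Sat M c γ (Sum.elim (fun _ => x) b) := by
  obtain ⟨x, hx, hxγ⟩ := hsat.exists_mem_typeSet_and_sat b {θ | Sat M c θ fun _ => a} γ
    fun q hq => by
      obtain ⟨x, hx, hxγ⟩ := h (Formula.iInf fun θ : q => θ.1) (sat_iInf.2 fun θ => hq θ.2)
      exact ⟨x, fun θ hθ => sat_iInf.1 hx ⟨θ, hθ⟩, hxγ⟩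
  exact ⟨x, sameType_of_forall_sat_imp hx, hxγ⟩

end Saturation

theorem CLOEquiv.exists_sat_iff {M N : Type} [LinearOrder M] [LinearOrder N] {cM : ι → Set M}
    {cN : ι → Set N} (h : CLOEquiv ι M cM N cN) (φ : (CLOLang ι).Formula Unit) :
    (∃ x, Sat M cM φ fun _ => x) ↔ ∃ y, Sat N cN φ fun _ => y := by
  let _ := CLOStr ι M cM
  let _ := CLOStr ι N cN
  have key : Sat M cM ((φ.relabel Sum.inr).iExs Unit) (default : Empty → M) ↔
      Sat N cN ((φ.relabel Sum.inr).iExs Unit) (default : Empty → N) :=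
    h.realize_sentence _
  simp only [sat_iExs_unit, sat_relabel] at key
  exact key

section ConvexTypes

variable {M₀ : Type} [LinearOrder M₀] {c₀ : ι → Set M₀} {S : Type} [LinearOrder S]
  {cS : ι → Set S} {Φ : Set ((CLOLang ι).Formula Unit)}

theorem TypeConsistent.typeSet_nonempty (hΦ : TypeConsistent ι M₀ c₀ Φ)
    (hS : CLOEquiv ι S cS M₀ c₀) (hsat : Aleph0Saturated ι S cS) :
    (TypeSet ι S cS Φ).Nonempty := by
  obtain ⟨B, iB, cB, hB, b, hb⟩ := hΦ
  obtain ⟨x, hx, -⟩ := hsat.exists_mem_typeSet_and_sat Fin.elim0 Φ ⊤ fun q hq => by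
    have hqB : ∃ y, Sat B cB (Formula.iInf fun θ : q => θ.1) fun _ => y :=
      ⟨b, sat_iInf.2 fun θ => hb θ (hq θ.2)⟩
    obtain ⟨x, hx⟩ := (hS.exists_sat_iff _).trans (hB.exists_sat_iff _).symm |>.2 hqB
    exact ⟨x, fun θ hθ => sat_iInf.1 hx ⟨θ, hθ⟩, sat_top⟩
  exact ⟨x, hx⟩

theorem IsConvexType.mem_of_sat (hΦ : IsConvexType ι M₀ c₀ Φ) (hS : CLOEquiv ι S cS M₀ c₀)
    {ψ : (CLOLang ι).Formula Unit} (hψ : ConvexFml ι M₀ c₀ ψ) {a : S}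
    (ha : a ∈ TypeSet ι S cS Φ) (haψ : Sat S cS ψ fun _ => a) : ψ ∈ Φ :=
  hΦ.2.2 ψ hψ ⟨S, inferInstance, cS, hS, a, fun θ hθ => by
    rcases mem_insert_iff.1 hθ with rfl | hθΦ
    exacts [haψ, ha θ hθΦ]⟩

theorem exists_sameType_gt_of_sat_of_not_sat (hΦ : IsConvexType ι M₀ c₀ Φ)
    (hS : CLOEquiv ι S cS M₀ c₀) (hsat : Aleph0Saturated ι S cS) {a b : S}
    (ha : a ∈ TypeSet ι S cS Φ) (hb : b ∈ TypeSet ι S cS Φ) {θ : (CLOLang ι).Formula Unit}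
    (hθa : Sat S cS θ fun _ => a) (hθb : ¬Sat S cS θ fun _ => b) :
    ∃ x, SameType cS a x ∧ b < x := by
  obtain ⟨x, hax, hbx⟩ := hsat.exists_sameType_and_sat a ![b] (ltFml (Sum.inr 0) (Sum.inl ()))
    fun φ hφa => by
      by_contra! hφb
      replace hφb : ∀ y, Sat S cS φ (fun _ => y) → y ≤ b := fun y hy =>
        not_lt.1 fun hby => hφb y hy (sat_ltFml.2 hby)
      have hψ : lowerClosureFml (φ ⊓ θ) ∈ Φ := hΦ.mem_of_sat hS (convexFml_lowerClosureFml _) ha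
        (sat_lowerClosureFml.2 ⟨a, sat_inf.2 ⟨hφa, hθa⟩, le_rfl⟩)
      obtain ⟨y, hy, hby⟩ := sat_lowerClosureFml.1 (hb _ hψ)
      obtain ⟨hyφ, hyθ⟩ := sat_inf.1 hy
      exact hθb (le_antisymm (hφb y hyφ) hby ▸ hyθ)
  exact ⟨x, hax, sat_ltFml.1 hbx⟩

theorem exists_sameType_lt_of_sat_of_not_sat (hΦ : IsConvexType ι M₀ c₀ Φ)
    (hS : CLOEquiv ι S cS M₀ c₀) (hsat : Aleph0Saturated ι S cS) {a b : S}
    (ha : a ∈ TypeSet ι S cS Φ) (hb : b ∈ TypeSet ι S cS Φ) {θ : (CLOLang ι).Formula Unit}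
    (hθa : Sat S cS θ fun _ => a) (hθb : ¬Sat S cS θ fun _ => b) :
    ∃ x, SameType cS a x ∧ x < b := by
  obtain ⟨x, hax, hxb⟩ := hsat.exists_sameType_and_sat a ![b] (ltFml (Sum.inl ()) (Sum.inr 0))
    fun φ hφa => by
      by_contra! hφb
      replace hφb : ∀ y, Sat S cS φ (fun _ => y) → b ≤ y := fun y hy =>
        not_lt.1 fun hyb => hφb y hy (sat_ltFml.2 hyb)
      have hψ : upperClosureFml (φ ⊓ θ) ∈ Φ := hΦ.mem_of_sat hS (convexFml_upperClosureFml _) ha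
        (sat_upperClosureFml.2 ⟨a, sat_inf.2 ⟨hφa, hθa⟩, le_rfl⟩)
      obtain ⟨y, hy, hyb⟩ := sat_upperClosureFml.1 (hb _ hψ)
      obtain ⟨hyφ, hyθ⟩ := sat_inf.1 hy
      exact hθb (le_antisymm hyb (hφb y hyφ) ▸ hyθ)
  exact ⟨x, hax, sat_ltFml.1 hxb⟩

end ConvexTypes

end

theorem stmt10_general {ι : Type} {M₀ : Type} [LinearOrder M₀] (c₀ : ι → Set M₀)
    {S : Type} [LinearOrder S] (cS : ι → Set S)
    (hS : CLOEquiv ι S cS M₀ c₀) (hsat : SuffSaturated ι S cS)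
    (Φ : Set ((CLOLang ι).Formula Unit)) (hΦ : IsConvexType ι M₀ c₀ Φ) :
    (∃ x : S, TypeSet ι S cS Φ = {x}) ∨
      SelfAdditive ι (↥(TypeSet ι S cS Φ)) (subColor cS (TypeSet ι S cS Φ)) := by
  obtain ⟨x₀, hx₀⟩ := hΦ.2.1.typeSet_nonempty hS hsat.1
  rcases (TypeSet ι S cS Φ).subsingleton_or_nontrivial with hsub | hnt
  · exact Or.inl ⟨x₀, hsub.eq_singleton_of_mem hx₀⟩
  refine Or.inr ⟨hnt.coe_sort, fun φ hconv => ?_⟩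
  by_contra! hD
  obtain ⟨a, ha⟩ := hD.1
  obtain ⟨b, hb⟩ := (ne_univ_iff_exists_notMem _).1 hD.2
  obtain ⟨θ, hθa, hθb⟩ := exists_sat_not_sat_of_not_sameType fun hab =>
    hb (hsat.2.mem_fmlSet_of_sameType hab ha)
  obtain ⟨x, hax, hbx⟩ := exists_sameType_gt_of_sat_of_not_sat hΦ hS hsat.1 a.2 b.2 hθa hθb
  obtain ⟨y, hay, hyb⟩ := exists_sameType_lt_of_sat_of_not_sat hΦ hS hsat.1 a.2 b.2 hθa hθb
  have hx := hsat.2.mem_fmlSet_of_sameType (b := ⟨x, hax.mem_typeSet a.2⟩) hax ha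
  have hy := hsat.2.mem_fmlSet_of_sameType (b := ⟨y, hay.mem_typeSet a.2⟩) hay ha
  exact hb (hconv.out hy hx ⟨hyb.le, hbx.le⟩)

theorem stmt10 {ι : Type} [Countable ι] {M₀ : Type} [LinearOrder M₀] (c₀ : ι → Set M₀)
    {S : Type} [LinearOrder S] (cS : ι → Set S)
    (hS : CLOEquiv ι S cS M₀ c₀) (hsat : SuffSaturated ι S cS)
    (Φ : Set ((CLOLang ι).Formula Unit)) (hΦ : IsConvexType ι M₀ c₀ Φ) :
    (∃ x : S, TypeSet ι S cS Φ = {x}) ∨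
      SelfAdditive ι (↥(TypeSet ι S cS Φ)) (subColor cS (TypeSet ι S cS Φ)) :=
  stmt10_general c₀ cS hS hsat Φ hΦ
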